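/- arXiv:2111.09691 — 5 statements merged into one kernel-verified Lean document; each statement's English description precedes it below -/
import Mathlib

section
/- Let $T_1, T_2$ be spanning trees on $V$ with edge weights $d_1, d_2$ that are metrics, and let $K_1, \dots, K_r$ be the connected components of the graph $(V, E(T_1) \cap E(T_2))$. For each $j$, let $P_j$ be a Hamiltonian path on the vertex set of $K_j$ satisfying $(d_1+d_2)(P_j) \leq 2\,(d_1+d_2)(E(K_j))$. Define $T_i'$ by replacing, in $T_i$, the edges of each $K_j$ by the edges of $P_j$ ($i = 1,2$). Then $d_1(T_1') + d_2(T_2') \leq 2\,(d_1(T_1) + d_2(T_2))$. -/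
open Finset

variable {V : Type*} [Fintype V] [DecidableEq V]

/-- symmetrized edge cost of a (possibly asymmetric) weight function -/
noncomputable def ecost (d : V → V → ℝ) : Sym2 V → ℝ :=
  Sym2.lift ⟨fun x y => (d x y + d y x) / 2, fun x y => by ring⟩

/-- total cost of an edge set -/
noncomputable def cost (d : V → V → ℝ) (F : Finset (Sym2 V)) : ℝ :=
  ∑ e ∈ F, ecost d e

/-- edges of a cyclic tour given by a vertex list -/
def cycleEdges (l : List V) : Finset (Sym2 V) :=
  ((l.zip (l.rotate 1)).map fun p => s(p.1, p.2)).toFinset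

/-- edges of a path given by a vertex list -/
def pathEdges (l : List V) : Finset (Sym2 V) :=
  (l.zipWith (fun a b => s(a, b)) l.tail).toFinset

def IsHamCycle (l : List V) : Prop := l.Nodup ∧ ∀ v : V, v ∈ l

def IsHamPath (l : List V) : Prop := l.Nodup ∧ ∀ v : V, v ∈ l

def IsMetric (d : V → V → ℝ) : Prop :=
  (∀ x y, 0 ≤ d x y) ∧ (∀ x, d x x = 0) ∧ (∀ x y, d x y = d y x) ∧
    ∀ x y z, d x z ≤ d x y + d y z

def IsSpanningTree (E : Finset (Sym2 V)) : Prop :=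
  (SimpleGraph.fromEdgeSet (E : Set (Sym2 V))).IsTree

/-- edge multiset of a walk given by its vertex list -/
def walkEdges (l : List V) : Multiset (Sym2 V) :=
  (l.zipWith (fun a b => s(a, b)) l.tail : List (Sym2 V))

/-- cost of a walk, edges counted with multiplicity -/
noncomputable def walkCost (d : V → V → ℝ) (l : List V) : ℝ :=
  ((walkEdges l).map (ecost d)).sum

def IsClosedWalk (l : List V) : Prop := l ≠ [] ∧ l.head? = l.getLast?

/-- vertices touched by an edge set -/
def edgeVerts (F : Finset (Sym2 V)) : Finset V :=
  Finset.univ.filter fun v => ∃ e ∈ F, v ∈ e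

lemma ecost_nonneg {d : V → V → ℝ} (hd : IsMetric d) (e : Sym2 V) : 0 ≤ ecost d e := by
  induction e using Sym2.inductionOn with
  | hf x y =>
    have h1 := hd.1 x y
    have h2 := hd.1 y x
    simp only [ecost, Sym2.lift_mk]
    linarith

lemma cost_nonneg {d : V → V → ℝ} (hd : IsMetric d) (F : Finset (Sym2 V)) :
    0 ≤ cost d F :=
  Finset.sum_nonneg fun e _ => ecost_nonneg hd e

lemma cost_mono {d : V → V → ℝ} (hd : IsMetric d) {A B : Finset (Sym2 V)} (h : A ⊆ B) :
    cost d A ≤ cost d B :=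
  Finset.sum_le_sum_of_subset_of_nonneg h fun e _ _ => ecost_nonneg hd e

lemma cost_union_le {d : V → V → ℝ} (hd : IsMetric d) (A B : Finset (Sym2 V)) :
    cost d (A ∪ B) ≤ cost d A + cost d B := by
  have := Finset.sum_union_inter (s₁ := A) (s₂ := B) (f := ecost d)
  have h0 := cost_nonneg hd (A ∩ B)
  unfold cost at *
  linarith

lemma cost_sup_le {d : V → V → ℝ} (hd : IsMetric d) {ι : Type*} (s : Finset ι)
    (f : ι → Finset (Sym2 V)) : cost d (s.sup f) ≤ ∑ j ∈ s, cost d (f j) := by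
  induction s using Finset.cons_induction with
  | empty => simp [cost]
  | cons a s ha ih =>
    rw [Finset.sup_cons, Finset.sum_cons]
    calc cost d (f a ⊔ s.sup f) ≤ cost d (f a) + cost d (s.sup f) :=
          cost_union_le hd _ _
      _ ≤ _ := by linarith

lemma cost_sup_eq {d : V → V → ℝ} {ι : Type*} [DecidableEq ι] (s : Finset ι)
    (f : ι → Finset (Sym2 V)) (h : ∀ i ∈ s, ∀ j ∈ s, i ≠ j → Disjoint (f i) (f j)) :
    cost d (s.sup f) = ∑ j ∈ s, cost d (f j) := by
  induction s using Finset.cons_induction with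
  | empty => simp [cost]
  | cons a s ha ih =>
    rw [Finset.sup_cons, Finset.sum_cons]
    have hdisj : Disjoint (f a) (s.sup f) := by
      rw [Finset.disjoint_sup_right]
      intro i hi
      exact h a (Finset.mem_cons_self a s) i (Finset.mem_cons.2 (Or.inr hi))
        (fun he => ha (he ▸ hi))
    have : cost d (f a ⊔ s.sup f) = cost d (f a) + cost d (s.sup f) :=
      Finset.sum_union hdisj
    rw [this, ih fun i hi j hj hij =>
      h i (Finset.mem_cons.2 (Or.inr hi)) j (Finset.mem_cons.2 (Or.inr hj)) hij]

/-- replacing each connected component of `T1 ∩ T2` by a Hamiltonian path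
of at most twice its cost yields trees `T1'`, `T2'` of total cost at most
`2 (d1(T1) + d2(T2))`. -/
theorem stmt4 {V : Type*} [Fintype V] [DecidableEq V]
    (d1 d2 : V → V → ℝ) (hd1 : IsMetric d1) (hd2 : IsMetric d2)
    (T1 T2 : Finset (Sym2 V)) (hT1 : IsSpanningTree T1) (hT2 : IsSpanningTree T2)
    (r : ℕ) (comp : Fin r → Finset (Sym2 V))
    -- the `comp j` are the connected components of the graph `(V, T1 ∩ T2)`:
    (hcover : Finset.univ.sup comp = T1 ∩ T2)
    (hdisj : ∀ i j, i ≠ j → Disjoint (comp i) (comp j))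
    (hvdisj : ∀ i j, i ≠ j → Disjoint (edgeVerts (comp i)) (edgeVerts (comp j)))
    (hconn : ∀ j, ∀ u ∈ edgeVerts (comp j), ∀ v ∈ edgeVerts (comp j),
      (SimpleGraph.fromEdgeSet ((comp j : Finset (Sym2 V)) : Set (Sym2 V))).Reachable u v)
    -- Hamiltonian paths on the vertex sets of the components:
    (P : Fin r → List V) (hPnd : ∀ j, (P j).Nodup)
    (hPham : ∀ j, (P j).toFinset = edgeVerts (comp j))
    -- the double-tree cost guarantee for each path:
    (hPcost : ∀ j, cost d1 (pathEdges (P j)) + cost d2 (pathEdges (P j)) ≤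
      2 * (cost d1 (comp j) + cost d2 (comp j)))
    -- the replaced trees:
    (T1' T2' : Finset (Sym2 V))
    (hT1' : T1' = (T1 \ Finset.univ.sup comp) ∪ Finset.univ.sup fun j => pathEdges (P j))
    (hT2' : T2' = (T2 \ Finset.univ.sup comp) ∪ Finset.univ.sup fun j => pathEdges (P j)) :
    cost d1 T1' + cost d2 T2' ≤ 2 * (cost d1 T1 + cost d2 T2) := by
  set S := Finset.univ.sup comp with hS
  set Q := Finset.univ.sup fun j => pathEdges (P j) with hQ
  have hSsub1 : S ⊆ T1 := by rw [hcover]; exact Finset.inter_subset_left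
  have hSsub2 : S ⊆ T2 := by rw [hcover]; exact Finset.inter_subset_right
  have hSeq : ∀ d : V → V → ℝ, cost d S = ∑ j, cost d (comp j) := fun d =>
    cost_sup_eq _ _ fun i _ j _ hij => hdisj i j hij
  have h1 : cost d1 T1' ≤ cost d1 (T1 \ S) + cost d1 Q := by
    rw [hT1']; exact cost_union_le hd1 _ _
  have h2 : cost d2 T2' ≤ cost d2 (T2 \ S) + cost d2 Q := by
    rw [hT2']; exact cost_union_le hd2 _ _
  have hsd1 : cost d1 (T1 \ S) = cost d1 T1 - cost d1 S := by
    have := Finset.sum_sdiff (f := ecost d1) hSsub1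
    unfold cost; linarith [this]
  have hsd2 : cost d2 (T2 \ S) = cost d2 T2 - cost d2 S := by
    have := Finset.sum_sdiff (f := ecost d2) hSsub2
    unfold cost; linarith [this]
  have hQ1 : cost d1 Q ≤ ∑ j, cost d1 (pathEdges (P j)) := cost_sup_le hd1 _ _
  have hQ2 : cost d2 Q ≤ ∑ j, cost d2 (pathEdges (P j)) := cost_sup_le hd2 _ _
  have hsum : ∑ j, cost d1 (pathEdges (P j)) + ∑ j, cost d2 (pathEdges (P j)) ≤
      2 * (cost d1 S + cost d2 S) := by
    rw [hSeq d1, hSeq d2]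
    calc ∑ j, cost d1 (pathEdges (P j)) + ∑ j, cost d2 (pathEdges (P j))
        = ∑ j, (cost d1 (pathEdges (P j)) + cost d2 (pathEdges (P j))) := by
          rw [Finset.sum_add_distrib]
      _ ≤ ∑ j, 2 * (cost d1 (comp j) + cost d2 (comp j)) :=
          Finset.sum_le_sum fun j _ => hPcost j
      _ = 2 * (∑ j, cost d1 (comp j) + ∑ j, cost d2 (comp j)) := by
          rw [← Finset.sum_add_distrib, Finset.mul_sum]
  have hS1 : cost d1 S ≤ cost d1 T1 := cost_mono hd1 hSsub1
  have hS2 : cost d2 S ≤ cost d2 T2 := cost_mono hd2 hSsub2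
  linarith
end

section
/- Let $T_1, T_2$ be spanning trees of the complete graph on $V$, let $K_1,\dots,K_r$ be the connected components of $(V, E(T_1)\cap E(T_2))$, and for each $j$ let $P_j$ be a Hamiltonian path on the vertex set of $K_j$. Then $T_i' := (E(T_i) \setminus \bigcup_j E(K_j)) \cup \bigcup_j E(P_j)$ is again the edge set of a spanning tree of the complete graph on $V$, for $i=1,2$. -/
open Finset

variable {V : Type*} [Fintype V] [DecidableEq V]

section Aux
open SimpleGraph
open scoped Classical

variable {V : Type*} [Fintype V] [DecidableEq V]


omit [Fintype V] [DecidableEq V] in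
lemma reach_transfer {G H : SimpleGraph V} (h : ∀ a b, G.Adj a b → H.Reachable a b)
    {u v : V} (hr : G.Reachable u v) : H.Reachable u v := by
  obtain ⟨w⟩ := hr
  induction w with
  | nil => exact Reachable.refl _
  | cons had _ ih => exact (h _ _ had).trans ih

omit [DecidableEq V] in
lemma delete_edge (G : SimpleGraph V) (h : G.Connected) (hac : ¬ G.IsAcyclic) :
    ∃ e ∈ G.edgeSet, (G \ SimpleGraph.fromEdgeSet {e}).Connected ∧
      (G \ SimpleGraph.fromEdgeSet {e}).edgeSet = G.edgeSet \ {e} := by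
  simp only [IsAcyclic, not_forall, not_not] at hac
  obtain ⟨v, c, hc⟩ := hac
  cases c with
  | nil => exact absurd rfl hc.ne_nil
  | @cons _ b _ hadj p =>
    refine ⟨s(v, b), by simpa using hadj, ?_, ?_⟩
    · have hnb : ¬ G.IsBridge s(v, b) := by
        rw [isBridge_iff_adj_and_forall_cycle_notMem]
        intro hall
        exact hall (Walk.cons hadj p) hc (by simp)
        exact hadj
      have hreach : (G \ SimpleGraph.fromEdgeSet {s(v, b)}).Reachable v b := by
        by_contra hre
        exact hnb (isBridge_iff.2 hre)
      rw [connected_iff] at h ⊢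
      refine ⟨fun a a' => reach_transfer ?_ (h.1 a a'), h.2⟩
      intro x y hxy
      by_cases hxe : s(x, y) = s(v, b)
      · rw [Sym2.eq_iff] at hxe
        rcases hxe with ⟨rfl, rfl⟩ | ⟨rfl, rfl⟩
        · exact hreach
        · exact hreach.symm
      · refine SimpleGraph.Adj.reachable ⟨hxy, ?_⟩
        rw [fromEdgeSet_adj]
        rintro ⟨he, -⟩
        exact hxe (by simpa using he)
    · simp [edgeSet_sdiff, edgeSet_fromEdgeSet]

omit [DecidableEq V] in
lemma conn_card_le (G : SimpleGraph V) (h : G.Connected) :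
    Fintype.card V ≤ G.edgeSet.ncard + 1 := by
  generalize hn : G.edgeSet.ncard = n
  induction n using Nat.strong_induction_on generalizing G with
  | _ n ih =>
    by_cases hac : G.IsAcyclic
    · refine le_of_eq ?_
      rw [← hn, Set.ncard_eq_toFinset_card' G.edgeSet]
      exact (IsTree.card_edgeFinset ⟨h, hac⟩).symm
    · obtain ⟨e, he, hconn, hE⟩ := delete_edge G h hac
      have h1 : (G \ SimpleGraph.fromEdgeSet {e}).edgeSet.ncard = n - 1 := by
        rw [hE, Set.ncard_diff_singleton_of_mem he, hn]
      have hn1 : 1 ≤ n := by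
        rw [← hn]
        exact (Set.ncard_pos (Set.toFinite _)).2 ⟨e, he⟩
      have := ih (n-1) (by omega) _ hconn h1
      omega

omit [DecidableEq V] in
lemma isTree_of_connected_of_card_le (G : SimpleGraph V) (h : G.Connected)
    (hc : G.edgeSet.ncard + 1 ≤ Fintype.card V) : G.IsTree := by
  refine ⟨h, ?_⟩
  by_contra hac
  obtain ⟨e, he, hconn, hE⟩ := delete_edge G h hac
  have h2 := conn_card_le _ hconn
  rw [hE, Set.ncard_diff_singleton_of_mem he] at h2
  have h3 : 1 ≤ G.edgeSet.ncard := (Set.ncard_pos (Set.toFinite _)).2 ⟨e, he⟩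
  omega

lemma edgeSet_fromEdgeSet_finset (F : Finset (Sym2 V)) :
    (SimpleGraph.fromEdgeSet (F : Set (Sym2 V))).edgeSet
      = ↑(F.filter fun e => ¬ e.IsDiag) := by
  ext e
  simp [edgeSet_fromEdgeSet]

lemma ncard_edgeSet_fromEdgeSet (F : Finset (Sym2 V)) :
    (SimpleGraph.fromEdgeSet (F : Set (Sym2 V))).edgeSet.ncard
      = (F.filter fun e => ¬ e.IsDiag).card := by
  rw [edgeSet_fromEdgeSet_finset, Set.ncard_coe_finset]


lemma mem_edgeVerts {F : Finset (Sym2 V)} {v : V} : v ∈ edgeVerts F ↔ ∃ e ∈ F, v ∈ e := by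
  simp [edgeVerts]

omit [Fintype V] [DecidableEq V] in
lemma reach_induce {G : SimpleGraph V} {s : Set V} (hadj : ∀ a b, G.Adj a b → a ∈ s ∧ b ∈ s) :
    ∀ {u v : V} (_ : G.Walk u v) (hu : u ∈ s) (hv : v ∈ s),
      (G.induce s).Reachable ⟨u, hu⟩ ⟨v, hv⟩ := by
  intro u v w
  induction w with
  | nil => intro hu hv; exact Reachable.refl _
  | cons hab p ih =>
    intro hu hv
    have hb := (hadj _ _ hab).2
    exact (SimpleGraph.Adj.reachable (by exact hab)).trans (ih hb hv)

lemma card_edgeVerts_le (F : Finset (Sym2 V))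
    (hconn : ∀ u ∈ edgeVerts F, ∀ v ∈ edgeVerts F,
      (SimpleGraph.fromEdgeSet (F : Set (Sym2 V))).Reachable u v) :
    (edgeVerts F).card ≤ (F.filter fun e => ¬ e.IsDiag).card + 1 := by
  rcases Finset.eq_empty_or_nonempty (edgeVerts F) with he | ⟨u0, hu0⟩
  · simp [he]
  set G0 := SimpleGraph.fromEdgeSet (F : Set (Sym2 V)) with hG0
  set s : Set V := ↑(edgeVerts F) with hs
  have hadj : ∀ a b, G0.Adj a b → a ∈ s ∧ b ∈ s := by
    intro a b hab
    rw [hG0, fromEdgeSet_adj] at hab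
    constructor
    · simp only [hs, Finset.mem_coe]
      exact mem_edgeVerts.2 ⟨_, hab.1, Sym2.mem_mk_left _ _⟩
    · simp only [hs, Finset.mem_coe]
      exact mem_edgeVerts.2 ⟨_, hab.1, Sym2.mem_mk_right _ _⟩
  have hconn' : (G0.induce s).Connected := by
    rw [connected_iff]
    refine ⟨?_, ⟨⟨u0, by simp [hs, hu0]⟩⟩⟩
    rintro ⟨a, ha⟩ ⟨b, hb⟩
    obtain ⟨w⟩ := hconn a (by simpa [hs] using ha) b (by simpa [hs] using hb)
    exact reach_induce hadj w _ _
  have hcard := conn_card_le _ hconn'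
  have hvc : Fintype.card s = (edgeVerts F).card := by
    simp [hs]
  have hinj : (G0.induce s).edgeSet.ncard ≤ (F.filter fun e => ¬ e.IsDiag).card := by
    have himg : (Sym2.map (Subtype.val : s → V)) '' (G0.induce s).edgeSet
        ⊆ ↑(F.filter fun e => ¬ e.IsDiag) := by
      rintro e ⟨e', he', rfl⟩
      induction e' using Sym2.ind with
      | _ a b =>
        rw [mem_edgeSet] at he'
        have hGadj : G0.Adj ↑a ↑b := he'
        rw [hG0, fromEdgeSet_adj] at hGadj
        simp only [Sym2.map_pair_eq, Finset.coe_filter, Set.mem_setOf_eq, Finset.mem_coe]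
        exact ⟨by exact_mod_cast hGadj.1, by simp [Sym2.isDiag_iff_proj_eq, hGadj.2]⟩
    calc (G0.induce s).edgeSet.ncard
        = ((Sym2.map (Subtype.val : s → V)) '' (G0.induce s).edgeSet).ncard :=
          (Set.ncard_image_of_injective _ (Sym2.map.injective Subtype.val_injective)).symm
      _ ≤ ((F.filter fun e => ¬ e.IsDiag : Finset (Sym2 V)) : Set (Sym2 V)).ncard :=
          Set.ncard_le_ncard himg (Set.toFinite _)
      _ = (F.filter fun e => ¬ e.IsDiag).card := Set.ncard_coe_finset _
  rw [hvc] at hcard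
  omega

omit [Fintype V] in
lemma pathEdges_cons_subset (a : V) (l : List V) : pathEdges l ⊆ pathEdges (a :: l) := by
  cases l with
  | nil => simp [pathEdges]
  | cons b t =>
    intro e he
    simp only [pathEdges, List.tail_cons, List.zipWith_cons_cons, List.toFinset_cons,
      Finset.mem_insert] at he ⊢
    tauto

omit [Fintype V] in
lemma pathReach : ∀ (t : List V) (a : V), (a :: t).Nodup → ∀ v ∈ a :: t,
    (SimpleGraph.fromEdgeSet ((pathEdges (a :: t) : Finset (Sym2 V)) : Set (Sym2 V))).Reachable
      a v := by
  intro t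
  induction t with
  | nil =>
    intro a _ v hv
    simp only [List.mem_singleton] at hv
    subst hv
    exact Reachable.refl _
  | cons b t' ih =>
    intro a hnd v hv
    have hane : a ∉ b :: t' := (List.nodup_cons.1 hnd).1
    have hadj : (fromEdgeSet ((pathEdges (a :: b :: t') : Finset (Sym2 V)) : Set (Sym2 V))).Adj
        a b := by
      rw [fromEdgeSet_adj]
      refine ⟨?_, fun h => hane (h ▸ List.mem_cons_self)⟩
      simp [pathEdges]
    rcases List.mem_cons.1 hv with rfl | hv'
    · exact Reachable.refl _
    · have h2 := ih b (List.nodup_cons.1 hnd).2 v hv'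
      have h3 := h2.mono (fromEdgeSet_mono
        (Finset.coe_subset.2 (pathEdges_cons_subset a (b :: t'))))
      exact hadj.reachable.trans h3

omit [Fintype V] in
lemma pathReach' (l : List V) (hnd : l.Nodup) {u v : V} (hu : u ∈ l) (hv : v ∈ l) :
    (SimpleGraph.fromEdgeSet ((pathEdges l : Finset (Sym2 V)) : Set (Sym2 V))).Reachable u v := by
  cases l with
  | nil => simp at hu
  | cons a t => exact (pathReach t a hnd u hu).symm.trans (pathReach t a hnd v hv)

lemma main_aux (T : Finset (Sym2 V)) (hT : IsSpanningTree T)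
    (r : ℕ) (comp : Fin r → Finset (Sym2 V))
    (hS : Finset.univ.sup comp ⊆ T)
    (hdisj : ∀ i j, i ≠ j → Disjoint (comp i) (comp j))
    (hconn : ∀ j, ∀ u ∈ edgeVerts (comp j), ∀ v ∈ edgeVerts (comp j),
      (SimpleGraph.fromEdgeSet ((comp j : Finset (Sym2 V)) : Set (Sym2 V))).Reachable u v)
    (P : Fin r → List V) (hPnd : ∀ j, (P j).Nodup)
    (hPham : ∀ j, (P j).toFinset = edgeVerts (comp j)) :
    IsSpanningTree ((T \ Finset.univ.sup comp) ∪ Finset.univ.sup fun j => pathEdges (P j)) := by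
  have hGT : (SimpleGraph.fromEdgeSet (T : Set (Sym2 V))).IsTree := hT
  set S := Finset.univ.sup comp with hSdef
  set Q := Finset.univ.sup fun j => pathEdges (P j) with hQdef
  set T' := (T \ S) ∪ Q with hT'def
  -- connectivity of the new graph
  have hconn' : (SimpleGraph.fromEdgeSet (T' : Set (Sym2 V))).Connected := by
    have h0 := hGT.isConnected
    rw [connected_iff] at h0 ⊢
    refine ⟨fun a b => reach_transfer ?_ (h0.1 a b), h0.2⟩
    intro x y hxy
    rw [fromEdgeSet_adj] at hxy
    have hxyT : s(x, y) ∈ T := by exact_mod_cast hxy.1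
    by_cases hxS : s(x, y) ∈ S
    · rw [hSdef, Finset.mem_sup] at hxS
      obtain ⟨j, -, hj⟩ := hxS
      have hx : x ∈ P j := by
        rw [← List.mem_toFinset, hPham]
        exact mem_edgeVerts.2 ⟨_, hj, Sym2.mem_mk_left _ _⟩
      have hy : y ∈ P j := by
        rw [← List.mem_toFinset, hPham]
        exact mem_edgeVerts.2 ⟨_, hj, Sym2.mem_mk_right _ _⟩
      refine (pathReach' (P j) (hPnd j) hx hy).mono (fromEdgeSet_mono (Finset.coe_subset.2 ?_))
      exact (Finset.le_sup (f := fun j => pathEdges (P j)) (Finset.mem_univ j)).trans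
        Finset.subset_union_right
    · refine SimpleGraph.Adj.reachable ?_
      rw [fromEdgeSet_adj]
      refine ⟨?_, hxy.2⟩
      rw [hT'def]
      push_cast
      exact Or.inl (by exact_mod_cast Finset.mem_sdiff.2 ⟨hxyT, hxS⟩)
  -- edge counting
  have percomp : ∀ j, (pathEdges (P j)).card ≤ ((comp j).filter fun e => ¬ e.IsDiag).card := by
    intro j
    have hL1 := card_edgeVerts_le (comp j) (hconn j)
    have hlen : (P j).length = (edgeVerts (comp j)).card := by
      rw [← hPham j]
      exact (List.toFinset_card_of_nodup (hPnd j)).symm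
    have hpe : (pathEdges (P j)).card ≤ (P j).length - 1 := by
      have h1 : (pathEdges (P j)).card
          ≤ ((P j).zipWith (fun a b => s(a, b)) (P j).tail).length := List.toFinset_card_le _
      rwa [List.length_zipWith, List.length_tail, min_eq_right (Nat.sub_le _ _)] at h1
    omega
  have hQcard : (Q.filter fun e => ¬ e.IsDiag).card
      ≤ ∑ j, ((comp j).filter fun e => ¬ e.IsDiag).card := by
    calc (Q.filter fun e => ¬ e.IsDiag).card
        ≤ Q.card := Finset.card_le_card (Finset.filter_subset _ _)
      _ ≤ ∑ j, (pathEdges (P j)).card := by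
          rw [hQdef, Finset.sup_eq_biUnion]
          exact Finset.card_biUnion_le
      _ ≤ ∑ j, ((comp j).filter fun e => ¬ e.IsDiag).card :=
          Finset.sum_le_sum fun j _ => percomp j
  have hSsum : (S.filter fun e => ¬ e.IsDiag).card
      = ∑ j, ((comp j).filter fun e => ¬ e.IsDiag).card := by
    rw [hSdef, Finset.sup_eq_biUnion, Finset.filter_biUnion]
    exact Finset.card_biUnion fun i _ j _ hij =>
      Finset.disjoint_filter_filter (hdisj i j hij)
  have hsub : (S.filter fun e => ¬ e.IsDiag) ⊆ (T.filter fun e => ¬ e.IsDiag) :=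
    Finset.filter_subset_filter _ hS
  have hsd : ((T \ S).filter fun e => ¬ e.IsDiag)
      = (T.filter fun e => ¬ e.IsDiag) \ (S.filter fun e => ¬ e.IsDiag) := by
    ext e
    simp only [Finset.mem_sdiff, Finset.mem_filter]
    tauto
  have hT'card : (T'.filter fun e => ¬ e.IsDiag).card ≤ (T.filter fun e => ¬ e.IsDiag).card := by
    calc (T'.filter fun e => ¬ e.IsDiag).card
        ≤ ((T \ S).filter fun e => ¬ e.IsDiag).card + (Q.filter fun e => ¬ e.IsDiag).card := by
          rw [hT'def, Finset.filter_union]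
          exact Finset.card_union_le _ _
      _ ≤ ((T \ S).filter fun e => ¬ e.IsDiag).card + (S.filter fun e => ¬ e.IsDiag).card := by
          rw [hSsum]; omega
      _ = (T.filter fun e => ¬ e.IsDiag).card := by
          rw [hsd, Finset.card_sdiff_add_card_eq_card hsub]
  have hTn : (T.filter fun e => ¬ e.IsDiag).card + 1 = Fintype.card V := by
    have h1 := hGT.card_edgeFinset
    rwa [show (SimpleGraph.fromEdgeSet (T : Set (Sym2 V))).edgeFinset
        = T.filter fun e => ¬ e.IsDiag from by
      ext e; simp [SimpleGraph.mem_edgeFinset, SimpleGraph.edgeSet_fromEdgeSet]] at h1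
  show (SimpleGraph.fromEdgeSet (T' : Set (Sym2 V))).IsTree
  refine isTree_of_connected_of_card_le _ hconn' ?_
  rw [ncard_edgeSet_fromEdgeSet]
  omega


end Aux

/-- replacing each connected component of `T1 ∩ T2` by a Hamiltonian path
on the same vertex set again yields spanning trees of the complete graph on `V`. -/
theorem stmt5 {V : Type*} [Fintype V] [DecidableEq V]
    (T1 T2 : Finset (Sym2 V)) (hT1 : IsSpanningTree T1) (hT2 : IsSpanningTree T2)
    (r : ℕ) (comp : Fin r → Finset (Sym2 V))
    -- the `comp j` are the connected components of the graph `(V, T1 ∩ T2)`: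
    (hcover : Finset.univ.sup comp = T1 ∩ T2)
    (hdisj : ∀ i j, i ≠ j → Disjoint (comp i) (comp j))
    (hvdisj : ∀ i j, i ≠ j → Disjoint (edgeVerts (comp i)) (edgeVerts (comp j)))
    (hconn : ∀ j, ∀ u ∈ edgeVerts (comp j), ∀ v ∈ edgeVerts (comp j),
      (SimpleGraph.fromEdgeSet ((comp j : Finset (Sym2 V)) : Set (Sym2 V))).Reachable u v)
    -- Hamiltonian paths on the vertex sets of the components:
    (P : Fin r → List V) (hPnd : ∀ j, (P j).Nodup)
    (hPham : ∀ j, (P j).toFinset = edgeVerts (comp j))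
    -- the replaced trees:
    (T1' T2' : Finset (Sym2 V))
    (hT1' : T1' = (T1 \ Finset.univ.sup comp) ∪ Finset.univ.sup fun j => pathEdges (P j))
    (hT2' : T2' = (T2 \ Finset.univ.sup comp) ∪ Finset.univ.sup fun j => pathEdges (P j)) :
    IsSpanningTree T1' ∧ IsSpanningTree T2' := by
  subst hT1' hT2'
  have h1 : Finset.univ.sup comp ⊆ T1 := by rw [hcover]; exact Finset.inter_subset_left
  have h2 : Finset.univ.sup comp ⊆ T2 := by rw [hcover]; exact Finset.inter_subset_right
  exact ⟨main_aux T1 hT1 r comp h1 hdisj hconn P hPnd hPham,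
    main_aux T2 hT2 r comp h2 hdisj hconn P hPnd hPham⟩
end

section
/- Let $T$ be a tree on vertex set $V$ and let $\mathcal{P} = \{P_1, \dots, P_r\}$ be a set of pairwise vertex-disjoint paths, each of which is a subgraph of $T$. Let $T''$ be the multigraph obtained by doubling every edge of $T$. Then $T''$ admits an Eulerian circuit $W''$ that contains each path $P_j$ as a contiguous simple subpath (each $P_j$ is traversed consecutively in one direction). -/
open Finset

variable {V : Type*} [Fintype V] [DecidableEq V]

/-!
Induction on the number of edges of an acyclic edge set, which may contain loops (`fromEdgeSet`
ignores them, so a spanning tree `T` may contain edges `s(x, x)`). A loop `s(x, x)` is added to a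
tour of the other edges as the detour `x, x, x`. Without loops, the forest has a leaf `u` with
neighbour `v`, and a tour of the other edges, for the paths with `u` deleted, is extended by the
detour `v, u, v`. The tour visits the whole component of a base vertex; this is where `v` and the
one-vertex paths are found.

The detour is inserted at an occurrence of `v` that no path runs through: the end of the path
ending at `v`, if there is one; and if `v` is interior to a path, the path edge into `v` is
traversed twice by the tour but only once inside the path, so `v` also occurs outside the path.
-/

namespace List
variable {α : Type*}

theorem infix_append_singleton_or_infix_cons_of_infix {l X Y : List α} {v : α}
    (h : l <:+: X ++ v :: Y) (hv : v ∉ l) : l <:+: X ++ [v] ∨ l <:+: v :: Y := by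
  obtain ⟨S, T, hST⟩ := h
  rw [append_assoc, append_eq_append_iff] at hST
  rcases hST with ⟨A, rfl, hA⟩ | ⟨C, rfl, hC⟩
  · left
    rcases append_eq_append_iff.mp hA with ⟨A', rfl, -⟩ | ⟨_ | ⟨w, C'⟩, rfl, hC'⟩
    · exact ⟨S, A' ++ [v], by simp⟩
    · exact ⟨S, [v], by simp⟩
    · simp only [cons_append, cons.injEq] at hC'
      simp [hC'.1] at hv
  · exact .inr ⟨C, T, by simp [hC]⟩
end List

section WalkEdges

variable {V : Type*}

@[simp] theorem walkEdges_nil : walkEdges ([] : List V) = 0 := rfl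

@[simp] theorem walkEdges_singleton (a : V) : walkEdges [a] = 0 := rfl

@[simp] theorem walkEdges_cons_cons (a b : V) (l : List V) :
    walkEdges (a :: b :: l) = s(a, b) ::ₘ walkEdges (b :: l) := rfl

theorem mem_pathEdges [DecidableEq V] {l : List V} {e : Sym2 V} :
    e ∈ pathEdges l ↔ e ∈ walkEdges l :=
  List.mem_toFinset

theorem walkEdges_append_cons (X Y : List V) (v : V) :
    walkEdges (X ++ v :: Y) = walkEdges (X ++ [v]) + walkEdges (v :: Y) := by
  induction X with
  | nil => simp
  | cons a X ih =>
    cases X with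
    | nil => simp
    | cons b X => simpa using ih

theorem mem_walkEdges_iff {l : List V} {e : Sym2 V} :
    e ∈ walkEdges l ↔ ∃ S a b T, l = S ++ a :: b :: T ∧ e = s(a, b) := by
  constructor
  · intro he
    induction l with
    | nil => simp at he
    | cons a l ih =>
      cases l with
      | nil => simp at he
      | cons b l =>
        rcases Multiset.mem_cons.mp (walkEdges_cons_cons a b l ▸ he) with rfl | he
        · exact ⟨[], a, b, l, rfl, rfl⟩
        · obtain ⟨S, c, d, T, hl, rfl⟩ := ih he
          exact ⟨a :: S, c, d, T, by simp [hl], rfl⟩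
  · rintro ⟨S, a, b, T, rfl, rfl⟩
    rw [walkEdges_append_cons]
    simp

theorem walkEdges_reverse (l : List V) : walkEdges l.reverse = walkEdges l := by
  induction l with
  | nil => rfl
  | cons a l ih =>
    cases l with
    | nil => rfl
    | cons b l =>
      rw [List.reverse_cons, List.reverse_cons, List.append_assoc, List.singleton_append,
        walkEdges_append_cons, ← List.reverse_cons, ih, add_comm]
      simp [Sym2.eq_swap]

theorem mem_of_mem_walkEdges {l : List V} {e : Sym2 V} {x : V} (he : e ∈ walkEdges l)
    (hx : x ∈ e) : x ∈ l := by
  obtain ⟨S, a, b, T, rfl, rfl⟩ := mem_walkEdges_iff.mp he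
  rcases Sym2.mem_iff.mp hx with rfl | rfl <;> simp

theorem List.IsInfix.mem_walkEdges {l l' : List V} {e : Sym2 V} (h : l <:+: l')
    (he : e ∈ walkEdges l) : e ∈ walkEdges l' := by
  obtain ⟨S, a, b, T, rfl, rfl⟩ := mem_walkEdges_iff.mp he
  obtain ⟨S', T', rfl⟩ := h
  exact mem_walkEdges_iff.mpr ⟨S' ++ S, a, b, T ++ T', by simp, rfl⟩

theorem not_isDiag_of_mem_walkEdges {l : List V} (hl : l.Nodup) {e : Sym2 V}
    (he : e ∈ walkEdges l) : ¬ e.IsDiag := by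
  obtain ⟨S, a, b, T, rfl, rfl⟩ := mem_walkEdges_iff.mp he
  simp only [List.nodup_append, List.nodup_cons, List.mem_cons] at hl
  simpa using fun hab => hl.2.1.1 (.inl hab)

end WalkEdges

section Split

variable {V : Type*}

/-- At the occurrence `W = X ++ v :: Y`, inserting a closed detour from `v` keeps `B`
contiguous; if `B` ends (starts) at `v`, it ends (starts) exactly at this occurrence. -/
def SplitsAt (B X : List V) (v : V) (Y : List V) : Prop :=
  (B <:+: X ++ [v] ∨ B <:+: v :: Y) ∧ (B.getLast? = some v → B <:+ X ++ [v]) ∧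
    (B.head? = some v → B <+: v :: Y)

theorem splitsAt_of_not_mem {B X Y : List V} {v : V} (hB : B <:+: X ++ v :: Y) (hv : v ∉ B) :
    SplitsAt B X v Y :=
  ⟨List.infix_append_singleton_or_infix_cons_of_infix hB hv,
    fun h => absurd (List.mem_of_mem_getLast? h) hv, fun h => absurd (List.mem_of_mem_head? h) hv⟩

theorem List.Nodup.eq_nil_of_getLast?_eq {A C : List V} {v : V} (h : (A ++ v :: C).Nodup)
    (hl : (A ++ v :: C).getLast? = some v) : C = [] := by
  rcases C.eq_nil_or_concat' with rfl | ⟨C, c, rfl⟩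
  · rfl
  · rw [← List.cons_append, ← List.append_assoc, List.getLast?_concat, Option.some_inj] at hl
    subst hl
    simp [List.nodup_append] at h

theorem List.Nodup.eq_nil_of_head?_eq {A C : List V} {v : V} (h : (A ++ v :: C).Nodup)
    (hl : (A ++ v :: C).head? = some v) : A = [] := by
  cases A with
  | nil => rfl
  | cons a A =>
    simp only [List.cons_append, List.head?_cons, Option.some_inj] at hl
    subst hl
    simp [List.nodup_append] at h

variable [DecidableEq V]

theorem mem_or_mem_of_two_le_count {S A C T : List V} {a v c : V}
    (hB : (A ++ a :: v :: c :: C).Nodup)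
    (hcount : 2 ≤ (walkEdges (S ++ (A ++ a :: v :: c :: C) ++ T)).count s(a, v)) :
    v ∈ S ∨ v ∈ T := by
  have hac : s(a, v) ≠ s(v, c) := by
    rw [Ne, Sym2.eq_iff]
    simp only [List.nodup_append, List.nodup_cons, List.mem_cons] at hB
    grind
  have hsplit : S ++ (A ++ a :: v :: c :: C) ++ T = (S ++ A) ++ a :: v :: c :: (C ++ T) := by
    simp
  rw [hsplit, walkEdges_append_cons, walkEdges_cons_cons, walkEdges_cons_cons,
    Multiset.count_add, Multiset.count_cons_self, Multiset.count_cons_of_ne hac] at hcount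
  have hv : v ∈ (S ++ A) ++ [a] ∨ v ∈ c :: (C ++ T) := by
    rcases Nat.eq_zero_or_pos ((walkEdges (S ++ A ++ [a])).count s(a, v)) with h | h
    · exact .inr (mem_of_mem_walkEdges (Multiset.count_pos.mp (by omega)) (Sym2.mem_mk_right a v))
    · exact .inl (mem_of_mem_walkEdges (Multiset.count_pos.mp h) (Sym2.mem_mk_right a v))
  simp only [List.nodup_append, List.nodup_cons, List.mem_cons, List.mem_append] at hB hv
  grind

theorem exists_splitsAt_of_mem {W S B T : List V} {v : V} (hW : W = S ++ B ++ T)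
    (hB : B.Nodup) (hv : v ∈ B) (hcount : ∀ e ∈ walkEdges B, 2 ≤ (walkEdges W).count e) :
    ∃ X Y, W = X ++ v :: Y ∧ SplitsAt B X v Y := by
  obtain ⟨A, C, rfl⟩ := List.append_of_mem hv
  rcases A.eq_nil_or_concat' with rfl | ⟨A, a, rfl⟩
  · refine ⟨S, C ++ T, by simp [hW], .inr ⟨[], T, by simp⟩, fun hl => ?_, fun _ => ⟨T, by simp⟩⟩
    rw [hB.eq_nil_of_getLast?_eq hl]
    exact ⟨S, by simp⟩
  rcases C with _ | ⟨c, C⟩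
  · refine ⟨S ++ A ++ [a], T, by simp [hW], .inl ⟨S, [], by simp⟩, fun _ => ⟨S, by simp⟩,
      fun hh => absurd (hB.eq_nil_of_head?_eq hh) (by simp)⟩
  have hB' : (A ++ a :: v :: c :: C).Nodup := by simpa using hB
  have hcount' := hcount s(a, v) (mem_walkEdges_iff.mpr ⟨A, a, v, c :: C, by simp, rfl⟩)
  rw [hW] at hcount'
  have hne_head : (A ++ [a] ++ v :: c :: C).head? ≠ some v :=
    fun hh => absurd (hB.eq_nil_of_head?_eq hh) (by simp)
  have hne_last : (A ++ [a] ++ v :: c :: C).getLast? ≠ some v :=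
    fun hl => absurd (hB.eq_nil_of_getLast?_eq hl) (by simp)
  rcases mem_or_mem_of_two_le_count hB' (by simpa using hcount') with hS | hT
  · obtain ⟨S₁, S₂, rfl⟩ := List.append_of_mem hS
    exact ⟨S₁, S₂ ++ (A ++ [a] ++ v :: c :: C) ++ T, by simp [hW],
      .inr ⟨v :: S₂, T, by simp⟩, fun h => absurd h hne_last, fun h => absurd h hne_head⟩
  · obtain ⟨T₁, T₂, rfl⟩ := List.append_of_mem hT
    exact ⟨S ++ (A ++ [a] ++ v :: c :: C) ++ T₁, T₂, by simp [hW],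
      .inl ⟨S, T₁ ++ [v], by simp⟩, fun h => absurd h hne_last, fun h => absurd h hne_head⟩

end Split

section Tour

variable {V ι : Type*} [DecidableEq V]

structure IsPathPacking (E : Finset (Sym2 V)) (P : ι → List V) : Prop where
  nodup : ∀ j, (P j).Nodup
  pathEdges_subset : ∀ j, pathEdges (P j) ⊆ E
  disjoint : ∀ i j, i ≠ j → Disjoint (P i).toFinset (P j).toFinset

structure IsDoubledTour (E : Finset (Sym2 V)) (P : ι → List V) (W : List V) : Prop where
  isClosedWalk : IsClosedWalk W
  walkEdges_eq : walkEdges W = E.val + E.val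
  infix_or_reverse_infix : ∀ j, P j <:+: W ∨ (P j).reverse <:+: W

theorem IsPathPacking.eq_of_mem {E : Finset (Sym2 V)} {P : ι → List V} (hP : IsPathPacking E P)
    {i j : ι} {v : V} (hi : v ∈ P i) (hj : v ∈ P j) : i = j := by
  by_contra hij
  exact Finset.disjoint_left.mp (hP.disjoint i j hij) (List.mem_toFinset.mpr hi)
    (List.mem_toFinset.mpr hj)

theorem IsDoubledTour.two_le_count {E : Finset (Sym2 V)} {P : ι → List V} {W : List V}
    (hW : IsDoubledTour E P W) (hP : IsPathPacking E P) (j : ι) {B : List V}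
    (hB : B = P j ∨ B = (P j).reverse) {e : Sym2 V} (he : e ∈ walkEdges B) :
    2 ≤ (walkEdges W).count e := by
  have heE : e ∈ E := by
    refine hP.pathEdges_subset j (mem_pathEdges.mpr ?_)
    rcases hB with rfl | rfl
    · exact he
    · rwa [walkEdges_reverse] at he
  rw [hW.walkEdges_eq, Multiset.count_add]
  have := Multiset.one_le_count_iff_mem.mpr heE
  omega

theorem IsDoubledTour.exists_splitsAt {E : Finset (Sym2 V)} {P : ι → List V} {W : List V}
    (hW : IsDoubledTour E P W) (hP : IsPathPacking E P) {v : V} (hv : v ∈ W) :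
    ∃ X Y, W = X ++ v :: Y ∧
      ∀ j, ∃ B, (B = P j ∨ B = (P j).reverse) ∧ SplitsAt B X v Y := by
  have hB : ∀ j, ∃ B, (B = P j ∨ B = (P j).reverse) ∧ B <:+: W := fun j =>
    (hW.infix_or_reverse_infix j).elim (fun h => ⟨_, .inl rfl, h⟩) (fun h => ⟨_, .inr rfl, h⟩)
  choose B hBP hBW using hB
  have hBnd : ∀ j, (B j).Nodup := fun j => by
    rcases hBP j with h | h <;> rw [h]
    exacts [hP.nodup j, List.nodup_reverse.mpr (hP.nodup j)]
  have hmem : ∀ j, v ∈ B j ↔ v ∈ P j := fun j => by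
    rcases hBP j with h | h <;> simp [h]
  by_cases hex : ∃ j₀, v ∈ P j₀
  · obtain ⟨j₀, hj₀⟩ := hex
    obtain ⟨S, T, hST⟩ := hBW j₀
    obtain ⟨X, Y, rfl, hsplit⟩ := exists_splitsAt_of_mem hST.symm (hBnd j₀) ((hmem j₀).mpr hj₀)
      (fun e he => hW.two_le_count hP j₀ (hBP j₀) he)
    refine ⟨X, Y, rfl, fun j => ⟨B j, hBP j, ?_⟩⟩
    by_cases hj : j = j₀
    · exact hj ▸ hsplit
    · exact splitsAt_of_not_mem (hBW j) fun h => hj (hP.eq_of_mem ((hmem j).mp h) hj₀)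
  · simp only [not_exists] at hex
    obtain ⟨X, Y, rfl⟩ := List.append_of_mem hv
    exact ⟨X, Y, rfl, fun j =>
      ⟨B j, hBP j, splitsAt_of_not_mem (hBW j) fun h => hex j ((hmem j).mp h)⟩⟩

end Tour

section Detour

variable {V ι : Type*}

theorem isClosedWalk_detour {X Y : List V} {v w : V} (h : IsClosedWalk (X ++ v :: Y)) :
    IsClosedWalk (X ++ v :: w :: v :: Y) := by
  refine ⟨by simp, ?_⟩
  have hhead : (X ++ v :: w :: v :: Y).head? = (X ++ v :: Y).head? := by cases X <;> simp
  have hlast : (X ++ v :: w :: v :: Y).getLast? = (X ++ v :: Y).getLast? := by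
    rcases Y.eq_nil_or_concat' with rfl | ⟨Y, y, rfl⟩
    · simp
    · simp only [← List.cons_append, ← List.append_assoc, List.getLast?_concat]
  rw [hhead, hlast]
  exact h.2

theorem walkEdges_detour (X Y : List V) (v w : V) :
    walkEdges (X ++ v :: w :: v :: Y) = s(v, w) ::ₘ s(v, w) ::ₘ walkEdges (X ++ v :: Y) := by
  rw [walkEdges_append_cons, walkEdges_append_cons X Y, walkEdges_cons_cons,
    walkEdges_cons_cons, Sym2.eq_swap (a := w)]
  simp only [Multiset.add_cons]

theorem SplitsAt.infix_detour {B X Y : List V} {v : V} (h : SplitsAt B X v Y) (w : V) :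
    B <:+: X ++ v :: w :: v :: Y := by
  rcases h.1 with h | h
  · exact h.trans ⟨[], w :: v :: Y, by simp⟩
  · exact h.trans ⟨X ++ [v, w], [], by simp⟩

theorem SplitsAt.infix_or_reverse_infix_detour {l B X Y : List V} {v : V}
    (hB : B = l ∨ B = l.reverse) (h : SplitsAt B X v Y) (w : V) :
    l <:+: X ++ v :: w :: v :: Y ∨ l.reverse <:+: X ++ v :: w :: v :: Y := by
  rcases hB with rfl | rfl
  exacts [.inl (h.infix_detour w), .inr (h.infix_detour w)]

variable [DecidableEq V]

theorem IsDoubledTour.detour {E : Finset (Sym2 V)} {P Q : ι → List V} {X Y : List V} {v w : V}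
    (hW : IsDoubledTour (E.erase s(v, w)) Q (X ++ v :: Y)) (he : s(v, w) ∈ E)
    (hP : ∀ j, P j <:+: X ++ v :: w :: v :: Y ∨ (P j).reverse <:+: X ++ v :: w :: v :: Y) :
    IsDoubledTour E P (X ++ v :: w :: v :: Y) := by
  refine ⟨isClosedWalk_detour hW.isClosedWalk, ?_, hP⟩
  have hE : E.val = s(v, w) ::ₘ (E.erase s(v, w)).val := by
    rw [Finset.erase_val, Multiset.cons_erase he]
  rw [walkEdges_detour, hW.walkEdges_eq, hE, Multiset.cons_add, Multiset.add_cons]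

end Detour

section Leaf

variable {V : Type*}

theorem eq_singleton_or_eq_append_or_eq_cons_of_leaf {l : List V} {u v : V} (hl : l.Nodup)
    (hu : u ∈ l) (hleaf : ∀ e ∈ walkEdges l, u ∈ e → e = s(u, v)) :
    l = [u] ∨ (∃ Q, l = Q ++ [v, u]) ∨ ∃ Q, l = u :: v :: Q := by
  obtain ⟨A, C, rfl⟩ := List.append_of_mem hu
  have hpred : ∀ {a}, a ∈ A → s(a, u) ∈ walkEdges (A ++ u :: C) → a = v := fun {a} ha he => by
    have := hleaf _ he (Sym2.mem_mk_right _ _)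
    have hau : a ≠ u := (List.nodup_append.mp hl).2.2 a ha u (List.mem_cons_self ..)
    grind [Sym2.eq_iff]
  have hsucc : ∀ {c}, c ∈ C → s(u, c) ∈ walkEdges (A ++ u :: C) → c = v := fun _ he =>
    Sym2.congr_right.mp (hleaf _ he (Sym2.mem_mk_left _ _))
  rcases A.eq_nil_or_concat' with rfl | ⟨A, a, rfl⟩ <;> rcases C with _ | ⟨c, C⟩
  · exact .inl rfl
  · have hc := hsucc (List.mem_cons_self ..) (mem_walkEdges_iff.mpr ⟨[], u, c, C, rfl, rfl⟩)
    exact .inr (.inr ⟨C, by simp [hc]⟩)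
  · have ha := hpred (by simp) (mem_walkEdges_iff.mpr ⟨A, a, u, [], by simp, rfl⟩)
    exact .inr (.inl ⟨A, by simp [ha]⟩)
  · have ha := hpred (by simp) (mem_walkEdges_iff.mpr ⟨A, a, u, c :: C, by simp, rfl⟩)
    have hc := hsucc (List.mem_cons_self ..)
      (mem_walkEdges_iff.mpr ⟨A ++ [a], u, c, C, by simp, rfl⟩)
    simp [List.nodup_append, ha, hc] at hl

variable [DecidableEq V]

theorem erase_append_pair_of_nodup {Q : List V} {u v : V} (hl : (Q ++ [v, u]).Nodup) :
    (Q ++ [v, u]).erase u = Q ++ [v] := by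
  have hu : u ∉ Q ++ [v] := by simp [List.nodup_append] at hl; grind
  rw [show Q ++ [v, u] = (Q ++ [v]) ++ [u] by simp, List.erase_append_right _ hu]
  simp

theorem erase_infix_of_leaf {l : List V} {u v : V} (hl : l.Nodup)
    (hleaf : ∀ e ∈ walkEdges l, u ∈ e → e = s(u, v)) : l.erase u <:+: l := by
  by_cases hu : u ∈ l
  · rcases eq_singleton_or_eq_append_or_eq_cons_of_leaf hl hu hleaf with rfl | ⟨Q, rfl⟩ | ⟨Q, rfl⟩
    · simp
    · rw [erase_append_pair_of_nodup hl]
      exact ⟨[], [u], by simp⟩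
    · rw [List.erase_cons_head]
      exact (List.suffix_cons _ _).isInfix
  · rw [List.erase_of_not_mem hu]

theorem infix_or_reverse_infix_detour_of_leaf {l B X Y : List V} {u v : V} (hl : l.Nodup)
    (hleaf : ∀ e ∈ walkEdges l, u ∈ e → e = s(u, v)) (hB : B = l.erase u ∨ B = (l.erase u).reverse)
    (h : SplitsAt B X v Y) :
    l <:+: X ++ v :: u :: v :: Y ∨ l.reverse <:+: X ++ v :: u :: v :: Y := by
  by_cases hu : u ∈ l
  swap
  · rw [List.erase_of_not_mem hu] at hB
    exact h.infix_or_reverse_infix_detour hB u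
  have hsuf : ∀ {C}, C <:+ X ++ [v] → C ++ [u] <:+: X ++ v :: u :: v :: Y := fun ⟨S, hS⟩ =>
    ⟨S, v :: Y, by rw [← List.append_assoc, hS]; simp⟩
  have hpre : ∀ {C}, C <+: v :: Y → u :: C <:+: X ++ v :: u :: v :: Y := fun ⟨T, hT⟩ =>
    ⟨X ++ [v], T, by rw [List.append_assoc, List.cons_append, hT]; simp⟩
  rcases eq_singleton_or_eq_append_or_eq_cons_of_leaf hl hu hleaf with rfl | ⟨Q, rfl⟩ | ⟨Q, rfl⟩
  · exact .inl ⟨X ++ [v], v :: Y, by simp⟩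
  · rw [erase_append_pair_of_nodup hl] at hB
    rcases hB with rfl | rfl
    · exact .inl (by simpa using hsuf (h.2.1 (by simp)))
    · exact .inr (by simpa using hpre (h.2.2 (by simp)))
  · rw [List.erase_cons_head] at hB
    rcases hB with rfl | rfl
    · exact .inl (hpre (h.2.2 rfl))
    · exact .inr (by simpa using hsuf (h.2.1 (by simp)))

end Leaf

section Induction

variable {V ι : Type*} [DecidableEq V]

theorem IsPathPacking.erase_of_isDiag {E : Finset (Sym2 V)} {P : ι → List V}
    (hP : IsPathPacking E P) {e : Sym2 V} (he : e.IsDiag) : IsPathPacking (E.erase e) P where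
  nodup := hP.nodup
  pathEdges_subset j _ hf := Finset.mem_erase.mpr
    ⟨fun h => not_isDiag_of_mem_walkEdges (hP.nodup j) (mem_pathEdges.mp hf) (h ▸ he),
      hP.pathEdges_subset j hf⟩
  disjoint := hP.disjoint

theorem IsPathPacking.erase_leaf {E : Finset (Sym2 V)} {P : ι → List V} {u v : V}
    (hP : IsPathPacking E P) (hleaf : ∀ e ∈ E, u ∈ e → e = s(u, v)) :
    IsPathPacking (E.erase s(u, v)) fun j => (P j).erase u where
  nodup j := (hP.nodup j).erase u
  pathEdges_subset j e he := by
    rw [mem_pathEdges] at he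
    have hleaf' : ∀ f ∈ walkEdges (P j), u ∈ f → f = s(u, v) := fun f hf =>
      hleaf f (hP.pathEdges_subset j (mem_pathEdges.mpr hf))
    have heE : e ∈ E := hP.pathEdges_subset j
      (mem_pathEdges.mpr ((erase_infix_of_leaf (hP.nodup j) hleaf').mem_walkEdges he))
    have hue : u ∉ e := fun hu => (hP.nodup j).not_mem_erase (mem_of_mem_walkEdges he hu)
    exact Finset.mem_erase.mpr ⟨fun h => hue (h ▸ Sym2.mem_mk_left u v), heE⟩
  disjoint i j hij := Finset.disjoint_left.mpr fun x hi hj =>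
    Finset.disjoint_left.mp (hP.disjoint i j hij)
      (List.mem_toFinset.mpr (List.mem_of_mem_erase (List.mem_toFinset.mp hi)))
      (List.mem_toFinset.mpr (List.mem_of_mem_erase (List.mem_toFinset.mp hj)))

theorem IsDoubledTour.exists_of_erase_loop {E : Finset (Sym2 V)} {P : ι → List V} {W : List V}
    {x : V} (hx : s(x, x) ∈ E) (hP : IsPathPacking E P)
    (hW : IsDoubledTour (E.erase s(x, x)) P W) (hxW : x ∈ W) :
    ∃ W', IsDoubledTour E P W' ∧ ∀ y ∈ W, y ∈ W' := by
  obtain ⟨X, Y, rfl, hsplit⟩ :=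
    hW.exists_splitsAt (hP.erase_of_isDiag (Sym2.mk_isDiag_iff.mpr rfl)) hxW
  refine ⟨X ++ x :: x :: x :: Y, hW.detour hx fun j => ?_, fun y hy => by
    simp only [List.mem_append, List.mem_cons] at hy ⊢; tauto⟩
  obtain ⟨B, hB, hBs⟩ := hsplit j
  exact hBs.infix_or_reverse_infix_detour hB x

theorem IsDoubledTour.exists_of_erase_leaf {E : Finset (Sym2 V)} {P : ι → List V} {W : List V}
    {u v : V} (he : s(u, v) ∈ E) (hleaf : ∀ e ∈ E, u ∈ e → e = s(u, v)) (hP : IsPathPacking E P)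
    (hW : IsDoubledTour (E.erase s(u, v)) (fun j => (P j).erase u) W) (hvW : v ∈ W) :
    ∃ W', IsDoubledTour E P W' ∧ u ∈ W' ∧ ∀ y ∈ W, y ∈ W' := by
  obtain ⟨X, Y, rfl, hsplit⟩ := hW.exists_splitsAt (hP.erase_leaf hleaf) hvW
  rw [Sym2.eq_swap] at he hW
  refine ⟨X ++ v :: u :: v :: Y, hW.detour he fun j => ?_, by simp, fun y hy => by
    simp only [List.mem_append, List.mem_cons] at hy ⊢; tauto⟩
  obtain ⟨B, hB, hBs⟩ := hsplit j
  exact infix_or_reverse_infix_detour_of_leaf (hP.nodup j)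
    (fun f hf => hleaf f (hP.pathEdges_subset j (mem_pathEdges.mpr hf))) hB hBs

end Induction

namespace SimpleGraph

variable {V : Type*} {G : SimpleGraph V}

theorem IsAcyclic.exists_adj_forall_adj_eq [Finite V] (hG : G.IsAcyclic) {a b : V}
    (hab : G.Adj a b) : ∃ u v, G.Adj u v ∧ ∀ w, G.Adj u w → w = v := by
  have : Nonempty V := ⟨a⟩
  obtain ⟨u, x, p, hp, hmax⟩ := Walk.exists_isPath_forall_isPath_length_le_length G
  have hnil : ¬ p.Nil := fun h => by
    have := hmax a b (hab.toWalk) (by simpa using hab.ne)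
    simp [Walk.length_eq_zero_iff.mpr h] at this
  refine ⟨u, p.snd, p.adj_snd hnil, fun w huw => hG.eq_snd_of_adj_start hp huw ?_⟩
  by_contra hw
  have := hmax w x (p.cons huw.symm) (hp.cons hw)
  simp at this

/-- A path between vertices other than the leaf `u` cannot pass through `u`. -/
theorem Reachable.deleteEdges_of_forall_adj_eq {u v a b : V} (h : G.Reachable a b)
    (hu : ∀ w, G.Adj u w → w = v) (ha : a ≠ u) (hb : b ≠ u) :
    (G.deleteEdges {s(u, v)}).Reachable a b := by
  obtain ⟨p, hp⟩ := h.exists_isPath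
  have hsub : (G.neighborSet u).Subsingleton := fun x hx y hy => (hu x hx).trans (hu y hy).symm
  have hup : u ∉ p.support :=
    hp.isTrail.not_mem_support_of_subsingleton_neighborSet ha.symm hb.symm hsub
  exact ⟨p.toDeleteEdge _ fun he => hup (p.fst_mem_support_of_mem_edges he)⟩

end SimpleGraph

section EdgeSets

open SimpleGraph

variable {V : Type*}

theorem exists_leaf_of_isAcyclic [Finite V] {E : Finset (Sym2 V)}
    (hE : (fromEdgeSet (E : Set (Sym2 V))).IsAcyclic) (hloop : ∀ x, s(x, x) ∉ E)
    (hne : E.Nonempty) : ∃ u v, s(u, v) ∈ E ∧ ∀ e ∈ E, u ∈ e → e = s(u, v) := by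
  have hadj : ∀ {a b}, s(a, b) ∈ E → (fromEdgeSet (E : Set (Sym2 V))).Adj a b := fun {a _} h =>
    (fromEdgeSet_adj _).mpr ⟨h, fun hab => hloop a (hab ▸ h)⟩
  obtain ⟨e, he⟩ := hne
  induction e using Sym2.ind with
  | _ a b =>
  obtain ⟨u, v, huv, hu⟩ := hE.exists_adj_forall_adj_eq (hadj he)
  refine ⟨u, v, ((fromEdgeSet_adj _).mp huv).1, fun e he hue => ?_⟩
  obtain ⟨w, rfl⟩ := Sym2.mem_iff_exists.mp hue
  rw [hu w (hadj he)]

variable [DecidableEq V]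

theorem fromEdgeSet_erase_of_isDiag (E : Finset (Sym2 V)) {e : Sym2 V} (he : e.IsDiag) :
    fromEdgeSet (E.erase e : Set (Sym2 V)) = fromEdgeSet E := by
  ext a b
  simp only [fromEdgeSet_adj, Finset.coe_erase, Set.mem_sdiff, Finset.mem_coe,
    Set.mem_singleton_iff]
  constructor
  · exact fun h => ⟨h.1.1, h.2⟩
  · exact fun h => ⟨⟨h.1, fun hab => h.2 (Sym2.mk_isDiag_iff.mp (hab ▸ he))⟩, h.2⟩

theorem reachable_fromEdgeSet_erase_of_leaf {E : Finset (Sym2 V)} {u v a b : V}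
    (hleaf : ∀ e ∈ E, u ∈ e → e = s(u, v)) (h : (fromEdgeSet (E : Set (Sym2 V))).Reachable a b)
    (ha : a ≠ u) (hb : b ≠ u) :
    (fromEdgeSet (E.erase s(u, v) : Set (Sym2 V))).Reachable a b := by
  have hu : ∀ w, (fromEdgeSet (E : Set (Sym2 V))).Adj u w → w = v := fun w h =>
    Sym2.congr_right.mp (hleaf _ ((fromEdgeSet_adj _).mp h).1 (Sym2.mem_mk_left u w))
  refine (h.deleteEdges_of_forall_adj_eq hu ha hb).mono fun x y hxy => ?_
  simp only [deleteEdges_adj, fromEdgeSet_adj, Set.mem_singleton_iff] at hxy ⊢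
  exact ⟨Finset.mem_erase.mpr ⟨hxy.2, hxy.1.1⟩, hxy.1.2⟩

end EdgeSets

section Main

open SimpleGraph

variable {V ι : Type*} [DecidableEq V]

theorem isDoubledTour_singleton {P : ι → List V} {s : V} (hP : IsPathPacking ∅ P)
    (hPs : ∀ j, ∀ x ∈ P j, x = s) : IsDoubledTour ∅ P [s] where
  isClosedWalk := ⟨List.cons_ne_nil _ _, rfl⟩
  walkEdges_eq := rfl
  infix_or_reverse_infix j := .inl <| match h : P j with
    | [] => List.nil_infix
    | [x] => by rw [hPs j x (by simp [h])]
    | a :: b :: l => absurd (hP.pathEdges_subset j (mem_pathEdges.mpr (h ▸ by simp)))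
        (Finset.notMem_empty s(a, b))

theorem exists_isDoubledTour [Finite V] (E : Finset (Sym2 V))
    (hE : (fromEdgeSet (E : Set (Sym2 V))).IsAcyclic) (s : V) (P : ι → List V)
    (hP : IsPathPacking E P)
    (hEs : ∀ e ∈ E, ∀ x ∈ e, (fromEdgeSet (E : Set (Sym2 V))).Reachable s x)
    (hPs : ∀ j, ∀ x ∈ P j, (fromEdgeSet (E : Set (Sym2 V))).Reachable s x) :
    ∃ W, IsDoubledTour E P W ∧
      ∀ x, (fromEdgeSet (E : Set (Sym2 V))).Reachable s x → x ∈ W := by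
  induction E using Finset.strongInduction generalizing s P with
  | H E ih =>
  by_cases hloop : ∃ x, s(x, x) ∈ E
  · obtain ⟨x, hx⟩ := hloop
    have hG := fromEdgeSet_erase_of_isDiag E (Sym2.mk_isDiag_iff.mpr (rfl : x = x))
    obtain ⟨W, hW, hcov⟩ := ih _ (Finset.erase_ssubset hx) (hG ▸ hE) s P
      (hP.erase_of_isDiag (Sym2.mk_isDiag_iff.mpr rfl))
      (fun e he y hy => hG ▸ hEs e (Finset.mem_of_mem_erase he) y hy) (hG ▸ hPs)
    obtain ⟨W', hW', hsub⟩ :=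
      hW.exists_of_erase_loop hx hP (hcov x (hG ▸ hEs _ hx x (Sym2.mem_mk_left x x)))
    exact ⟨W', hW', fun y hy => hsub y (hcov y (hG ▸ hy))⟩
  simp only [not_exists] at hloop
  rcases E.eq_empty_or_nonempty with rfl | hne
  · simp only [Finset.coe_empty, fromEdgeSet_empty, reachable_bot] at hPs ⊢
    exact ⟨[s], isDoubledTour_singleton hP fun j x hx => (hPs j x hx).symm,
      fun x hx => by simp [hx]⟩
  obtain ⟨u, v, huv, hleaf⟩ := exists_leaf_of_isAcyclic hE hloop hne
  have hsv := hEs _ huv v (Sym2.mem_mk_right u v)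
  have hreach : ∀ {x}, (fromEdgeSet (E : Set (Sym2 V))).Reachable s x → x ≠ u →
      (fromEdgeSet (E.erase s(u, v) : Set (Sym2 V))).Reachable v x := fun h hxu =>
    reachable_fromEdgeSet_erase_of_leaf hleaf (hsv.symm.trans h)
      (fun hvu => hloop u (hvu ▸ huv)) hxu
  obtain ⟨W, hW, hcov⟩ := ih _ (Finset.erase_ssubset huv)
    (hE.anti (fromEdgeSet_mono (by simp))) v (fun j => (P j).erase u) (hP.erase_leaf hleaf)
    (fun e he x hx => hreach (hEs e (Finset.mem_of_mem_erase he) x hx) fun hxu =>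
      Finset.ne_of_mem_erase he (hleaf e (Finset.mem_of_mem_erase he) (hxu ▸ hx)))
    (fun j x hx => hreach (hPs j x (List.mem_of_mem_erase hx)) fun hxu =>
      (hP.nodup j).not_mem_erase (hxu ▸ hx))
  obtain ⟨W', hW', huW', hsub⟩ := hW.exists_of_erase_leaf huv hleaf hP (hcov v .rfl)
  refine ⟨W', hW', fun x hx => ?_⟩
  by_cases hxu : x = u
  · exact hxu ▸ huW'
  · exact hsub x (hcov x (hreach hx hxu))

end Main

/-- the double of a tree admits an Eulerian circuit containing each path
of a family of pairwise vertex-disjoint subpaths of the tree as a contiguous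
simple subpath (traversed consecutively in one of the two directions). -/
theorem stmt6 {V : Type*} [Fintype V] [DecidableEq V]
    (T : Finset (Sym2 V)) (hT : IsSpanningTree T)
    (r : ℕ) (P : Fin r → List V)
    (hPnd : ∀ j, (P j).Nodup)
    (hPsub : ∀ j, pathEdges (P j) ⊆ T)
    (hPdisj : ∀ i j, i ≠ j → Disjoint (P i).toFinset (P j).toFinset) :
    ∃ W : List V, IsClosedWalk W ∧ walkEdges W = T.val + T.val ∧
      ∀ j, (P j) <:+: W ∨ (P j).reverse <:+: W := by
  obtain ⟨s⟩ := hT.connected.nonempty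
  obtain ⟨W, hW, -⟩ := exists_isDoubledTour T hT.isAcyclic s P ⟨hPnd, hPsub, hPdisj⟩
    (fun _ _ x _ => hT.connected s x) (fun _ x _ => hT.connected s x)
  exact ⟨W, hW.isClosedWalk, hW.walkEdges_eq, hW.infix_or_reverse_infix⟩
end

section
/- (Tightness of Lemma on path replacement, Paris railway metric.) Let $U = \{u_0, u_1, \dots, u_n\}$ with $n \geq 2$ and define $d(x,y) = 0$ if $x = y$, $d(x,y) = 1$ if exactly one of $x,y$ equals $u_0$, and $d(x,y) = 2$ otherwise. Then (a) $d$ is a metric on $U$; (b) the star with center $u_0$ has total weight $n$; and (c) every Hamiltonian path on $U$ has total $d$-weight at least $2n - 3$, hence every Hamiltonian path costs at least $(2 - 3/n)$ times the star. In particular the ratio of the cheapest Hamiltonian path to the minimum spanning tree tends to $2$ as $n \to \infty$. -/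
open Finset

variable {V : Type*} [Fintype V] [DecidableEq V]

lemma mem_edgeList : ∀ (l : List V) (e : Sym2 V),
    e ∈ l.zipWith (fun a b => s(a, b)) l.tail → ∀ v ∈ e, v ∈ l
  | [], e, he => by simp at he
  | [a], e, he => by simp at he
  | a :: b :: t, e, he => by
    simp only [List.tail_cons, List.zipWith_cons_cons, List.mem_cons] at he
    rcases he with rfl | he
    · intro v hv
      rw [Sym2.mem_iff] at hv
      rcases hv with rfl | rfl <;> simp
    · intro v hv
      have := mem_edgeList (b :: t) e he v hv
      exact List.mem_cons_of_mem _ this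

lemma nodup_edgeList : ∀ (l : List V), l.Nodup →
    (l.zipWith (fun a b => s(a, b)) l.tail).Nodup
  | [], _ => by simp
  | [a], _ => by simp
  | a :: b :: t, h => by
    simp only [List.tail_cons, List.zipWith_cons_cons]
    have ht : (b :: t).Nodup := h.of_cons
    refine List.nodup_cons.2 ⟨?_, nodup_edgeList (b :: t) ht⟩
    intro hmem
    have : a ∈ (b :: t : List V) :=
      mem_edgeList (b :: t) _ hmem a (by simp)
    exact (List.nodup_cons.1 h).1 this

lemma sum_bound (c : V → V → ℝ) (z : V)
    (h1 : ∀ a b : V, a ≠ b → 1 ≤ (c a b + c b a) / 2)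
    (h2 : ∀ a b : V, a ≠ b → a ≠ z → b ≠ z → 2 ≤ (c a b + c b a) / 2) :
    ∀ l : List V, l.Nodup →
      2 * (l.length : ℝ) - 2 -
          ((if z ∈ l then (1 : ℝ) else 0) + (if z ∈ l.tail then (1 : ℝ) else 0))
        ≤ ((l.zipWith (fun a b => s(a, b)) l.tail).map (ecost c)).sum
  | [], _ => by simp
  | [a], _ => by
    simp only [List.length_singleton, List.tail_cons]
    split_ifs <;> simp <;> norm_num
  | a :: b :: t, h => by
    have hab : a ≠ b := by
      intro hab; exact (List.nodup_cons.1 h).1 (hab ▸ (List.mem_cons_self : b ∈ b :: t))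
    have hIH := sum_bound c z h1 h2 (b :: t) h.of_cons
    simp only [List.tail_cons, List.zipWith_cons_cons, List.map_cons, List.sum_cons] at *
    have hec : ecost c s(a, b) = (c a b + c b a) / 2 := rfl
    rw [hec]
    have hlen : ((a :: b :: t : List V).length : ℝ) = ((b :: t : List V).length : ℝ) + 1 := by
      simp
    rw [hlen]
    by_cases hzt : z ∈ t
    · have haz : a ≠ z := by
        intro hz; exact (List.nodup_cons.1 h).1 (hz ▸ List.mem_cons_of_mem _ hzt)
      have hbz : b ≠ z := by
        intro hz; exact (List.nodup_cons.1 h.of_cons).1 (hz ▸ hzt)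
      have h2' := h2 a b hab haz hbz
      have hz1 : z ∈ (a :: b :: t : List V) := by simp [hzt]
      have hz2 : z ∈ (b :: t : List V) := by simp [hzt]
      simp only [hz1, hz2, hzt, if_true] at *
      linarith
    · by_cases hzl : z ∈ (a :: b :: t : List V)
      · have h1' := h1 a b hab
        simp only [hzl, hzt, if_true, if_false] at *
        by_cases hz2 : z ∈ (b :: t : List V) <;> simp only [hz2, if_true, if_false] at * <;>
          linarith
      · have haz : a ≠ z := fun hz => hzl (hz ▸ List.mem_cons_self)
        have hbz : b ≠ z := fun hz => hzl (hz ▸ List.mem_cons_of_mem _ List.mem_cons_self)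
        have hz2 : z ∉ (b :: t : List V) := fun hm => hzl (List.mem_cons_of_mem _ hm)
        have h2' := h2 a b hab haz hbz
        simp only [hzl, hz2, hzt, if_false] at *
        linarith

/-- the Paris railway metric on `n+1` points: it is a metric, the star
centered at `u₀` has weight `n`, and every Hamiltonian path costs at least `2n - 3`,
hence at least `(2 - 3/n)` times the star. -/
theorem stmt10 (n : ℕ) (hn : 2 ≤ n)
    (d : Fin (n + 1) → Fin (n + 1) → ℝ)
    (hd : ∀ x y, d x y = if x = y then 0 else if x = 0 ∨ y = 0 then 1 else 2)
    (star : Finset (Sym2 (Fin (n + 1))))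
    (hstar : star = (Finset.univ.filter fun i : Fin (n + 1) => i ≠ 0).image
      fun i => s((0 : Fin (n + 1)), i)) :
    IsMetric d ∧ cost d star = (n : ℝ) ∧
      ∀ P : List (Fin (n + 1)), IsHamPath P →
        (2 * (n : ℝ) - 3 ≤ cost d (pathEdges P) ∧
          (2 - 3 / (n : ℝ)) * cost d star ≤ cost d (pathEdges P)) := by
  have hnpos : (0 : ℝ) < (n : ℝ) := by
    exact_mod_cast Nat.lt_of_lt_of_le Nat.zero_lt_two hn
  -- basic facts about d
  have hd1 : ∀ x y : Fin (n + 1), x ≠ y → 1 ≤ d x y := by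
    intro x y hxy
    rw [hd]; simp only [hxy, if_false]
    split_ifs <;> norm_num
  have hd2 : ∀ x y : Fin (n + 1), x ≠ y → x ≠ 0 → y ≠ 0 → d x y = 2 := by
    intro x y hxy hx hy
    rw [hd]; simp [hxy, hx, hy]
  have hdsymm : ∀ x y, d x y = d y x := by
    intro x y
    rw [hd, hd]
    by_cases hxy : x = y
    · simp [hxy]
    · simp only [hxy, Ne.symm hxy, if_false]
      exact if_congr or_comm rfl rfl
  have hdnonneg : ∀ x y, 0 ≤ d x y := by
    intro x y; rw [hd]; split_ifs <;> norm_num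
  have hdle2 : ∀ x y, d x y ≤ 2 := by
    intro x y; rw [hd]; split_ifs <;> norm_num
  have hd0 : ∀ x, d x x = 0 := by intro x; rw [hd]; simp
  have hmetric : IsMetric d := by
    refine ⟨hdnonneg, hd0, hdsymm, ?_⟩
    intro x y z
    by_cases hxy : x = y
    · subst hxy; rw [hd0]; linarith [hdnonneg x z, le_refl (d x z)]
    · by_cases hyz : y = z
      · subst hyz; rw [hd0]; linarith [hdnonneg x y]
      · have := hd1 x y hxy
        have := hd1 y z hyz
        have := hdle2 x z
        linarith
  -- star cost
  have hstarcost : cost d star = (n : ℝ) := by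
    rw [hstar, cost]
    rw [Finset.sum_image]
    · have hterm : ∀ i ∈ Finset.univ.filter fun i : Fin (n + 1) => i ≠ 0,
          ecost d s((0 : Fin (n + 1)), i) = 1 := by
        intro i hi
        simp only [Finset.mem_filter] at hi
        have h1 : d 0 i = 1 := by rw [hd]; simp [Ne.symm hi.2]
        have h2 : d i 0 = 1 := by rw [hd]; simp [hi.2]
        show (d 0 i + d i 0) / 2 = 1
        rw [h1, h2]; norm_num
      rw [Finset.sum_congr rfl hterm]
      rw [Finset.sum_const, nsmul_eq_mul, mul_one]
      rw [Finset.filter_ne']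
      rw [Finset.card_erase_of_mem (Finset.mem_univ _)]
      simp
    · intro i hi j hj hij
      rw [Sym2.eq_iff] at hij
      simp only [Finset.mem_coe, Finset.mem_filter] at hi hj
      rcases hij with ⟨-, h⟩ | ⟨h, -⟩
      · exact h
      · exact absurd h.symm hj.2
  refine ⟨hmetric, hstarcost, ?_⟩
  intro P hP
  have hlen : P.length = n + 1 := by
    have : P.toFinset = Finset.univ := by
      ext v; simp [hP.2 v]
    have hc := List.toFinset_card_of_nodup hP.1
    rw [this] at hc
    simpa using hc.symm
  have hmain : 2 * (n : ℝ) - 3 ≤ cost d (pathEdges P) := by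
    have hnodupE := nodup_edgeList P hP.1
    have hsum : cost d (pathEdges P) =
        ((P.zipWith (fun a b => s(a, b)) P.tail).map (ecost d)).sum := by
      rw [cost, pathEdges]
      exact List.sum_toFinset _ hnodupE
    have hb := sum_bound d 0
      (fun a b hab => by
        have := hd1 a b hab
        have := hd1 b a (Ne.symm hab)
        linarith)
      (fun a b hab ha hb => by
        rw [hd2 a b hab ha hb, hd2 b a (Ne.symm hab) hb ha]; norm_num)
      P hP.1
    rw [hsum]
    rw [hlen] at hb
    push_cast at hb
    have h1 : (if (0 : Fin (n + 1)) ∈ P then (1 : ℝ) else 0) ≤ 1 := by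
      split_ifs <;> norm_num
    have h2 : (if (0 : Fin (n + 1)) ∈ P.tail then (1 : ℝ) else 0) ≤ 1 := by
      split_ifs <;> norm_num
    linarith
  refine ⟨hmain, ?_⟩
  rw [hstarcost]
  have : (2 - 3 / (n : ℝ)) * (n : ℝ) = 2 * (n : ℝ) - 3 := by
    field_simp
  rw [this]
  exact hmain
end

section
/- Let $\alpha \in (0,1]$ and suppose $\ell_e \geq \alpha u_e \geq 0$ for all $e \in E$. Let $(x^*, y^*)$ minimize $f_\ell(x,y) := \sum_e (C_e x_e + \ell_e y_e)$ over feasible pairs (with $C_e \geq 0$), and let $\mathrm{val}(x) := \max_{c \in \mathcal{U}} \min_{y \in \mathcal{X}^k(x)} \sum_e (C_e x_e + c_e y_e)$ for an uncertainty set $\mathcal{U}$ with $\ell \leq c \leq u$ pointwise for all $c \in \mathcal{U}$. Then $\mathrm{val}(x^*) \leq \frac{1}{\alpha} \min_{x} \mathrm{val}(x)$, i.e., an optimal solution of the recoverable problem with lower-bound costs is a $1/\alpha$-approximation for the recoverable robust problem. -/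
open Finset

/-- an optimal solution of the recoverable problem with lower-bound
costs is a `1/α`-approximation for the recoverable robust problem, when
`ℓ_e ≥ α u_e ≥ 0` for all `e`. -/
theorem stmt16 {E : Type*} [Fintype E] [DecidableEq (E → ℝ)]
    (α : ℝ) (hα0 : 0 < α) (hα1 : α ≤ 1)
    (C l u : E → ℝ) (hC : ∀ e, 0 ≤ C e)
    (hl : ∀ e, α * u e ≤ l e) (hu : ∀ e, 0 ≤ α * u e)
    (X : Finset (E → ℝ)) (hX : X.Nonempty)
    (hX01 : ∀ x ∈ X, ∀ e, x e = 0 ∨ x e = 1)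
    (Xk : (E → ℝ) → Finset (E → ℝ))
    (hXksub : ∀ x ∈ X, Xk x ⊆ X)
    (hXkne : ∀ x, (Xk x).Nonempty)
    (U : Set (E → ℝ)) (hUne : U.Nonempty)
    (hUbox : ∀ c ∈ U, ∀ e, l e ≤ c e ∧ c e ≤ u e)
    -- the robust value of a first-stage solution x:
    (val : (E → ℝ) → ℝ)
    (hval : ∀ x, val x = ⨆ c : U, (Xk x).inf' (hXkne x) fun y =>
      ∑ e, (C e * x e + (c : E → ℝ) e * y e))
    -- (x*, y*) minimizes the lower-bound cost over feasible pairs: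
    (xs ys : E → ℝ) (hxs : xs ∈ X) (hys : ys ∈ Xk xs)
    (hmin : ∀ x ∈ X, ∀ y ∈ Xk x,
      ∑ e, (C e * xs e + l e * ys e) ≤ ∑ e, (C e * x e + l e * y e)) :
    val xs ≤ (1 / α) * X.inf' hX val := by
  set L : ℝ := ∑ e, (C e * xs e + l e * ys e) with hL
  have hnonneg01 : ∀ x ∈ X, ∀ e, (0:ℝ) ≤ x e := by
    intro x hx e
    rcases hX01 x hx e with h | h <;> simp [h]
  -- Step B : val xs ≤ (1/α) * L
  have hUinst : Nonempty U := hUne.to_subtype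
  have hB : val xs ≤ (1 / α) * L := by
    rw [hval]
    apply ciSup_le
    rintro ⟨c, hc⟩
    have h1 : (Xk xs).inf' (hXkne xs) (fun y => ∑ e, (C e * xs e + c e * y e))
        ≤ ∑ e, (C e * xs e + c e * ys e) := inf'_le _ hys
    refine h1.trans ?_
    rw [hL, Finset.mul_sum]
    apply Finset.sum_le_sum
    intro e _
    have hye : 0 ≤ ys e := hnonneg01 ys (hXksub xs hxs hys) e
    have hxe : 0 ≤ xs e := hnonneg01 xs hxs e
    have hcu : c e ≤ u e := (hUbox c hc e).2
    have hua : u e ≤ (1/α) * l e := by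
      rw [div_mul_eq_mul_div, le_div_iff₀ hα0]
      nlinarith [hl e]
    have h1α : (1:ℝ) ≤ 1/α := by
      rw [le_div_iff₀ hα0]; linarith
    have := mul_nonneg (hC e) hxe
    have h2 : c e * ys e ≤ (1/α) * (l e * ys e) := by
      calc c e * ys e ≤ ((1/α) * l e) * ys e :=
            mul_le_mul_of_nonneg_right (hcu.trans hua) hye
        _ = (1/α) * (l e * ys e) := by ring
    calc C e * xs e + c e * ys e ≤ (1/α) * (C e * xs e) + (1/α) * (l e * ys e) := by
          nlinarith
      _ = (1/α) * (C e * xs e + l e * ys e) := by ring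
  -- Step A : L ≤ val x for all x ∈ X
  have hA : ∀ x ∈ X, L ≤ val x := by
    intro x hx
    rw [hval]
    obtain ⟨c, hc⟩ := hUne
    obtain ⟨y0, hy0⟩ := hXkne x
    have hbdd : BddAbove (Set.range fun c : U => (Xk x).inf' (hXkne x)
        (fun y => ∑ e, (C e * x e + (c : E → ℝ) e * y e))) := by
      refine ⟨∑ e, (C e * x e + u e * y0 e), ?_⟩
      rintro _ ⟨⟨c', hc'⟩, rfl⟩
      refine (inf'_le _ hy0).trans ?_
      apply Finset.sum_le_sum
      intro e _
      have hy0e : 0 ≤ y0 e := hnonneg01 y0 (hXksub x hx hy0) e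
      have := mul_le_mul_of_nonneg_right (hUbox c' hc' e).2 hy0e
      linarith
    refine le_trans ?_ (le_ciSup hbdd ⟨c, hc⟩)
    apply le_inf'
    intro y hy
    refine (hmin x hx y hy).trans ?_
    apply Finset.sum_le_sum
    intro e _
    have hye : 0 ≤ y e := hnonneg01 y (hXksub x hx hy) e
    have := mul_le_mul_of_nonneg_right (hUbox c hc e).1 hye
    linarith
  have hAinf : L ≤ X.inf' hX val := le_inf' _ _ hA
  have hαpos : 0 < 1/α := by positivity
  calc val xs ≤ (1/α) * L := hB
    _ ≤ (1/α) * X.inf' hX val := by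
        exact mul_le_mul_of_nonneg_left hAinf (le_of_lt hαpos)
end
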